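/- The system of coefficients c(λ;x) satisfies the monodromy conditions: whenever a partition λ has two distinct addable boxes, of (q,t)-contents x and y, so that λ ∪ x, λ ∪ y and λ ∪ x ∪ y are all partitions, then c(λ;x)·c(λ∪x;y) / (c(λ;y)·c(λ∪y;x)) = −(x−ty)(x−qy)(y−qtx) / ((y−tx)(y−qx)(x−qty)). -/

import Mathlib

/- Common setup: K = ℚ(q,t), Laurent polynomials in q,t, the Λ operation,
   partitions as antitone eventually-zero functions ℕ → ℕ (0-indexed rows:
   `f r` is the number of boxes in row `r+1`), the content sums B_λ, B*_λ,
   and the coefficients c(λ;x), c*(μ;x). -/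

noncomputable section

/-- The field ℚ(q,t). -/
abbrev Kq : Type := FractionRing (MvPolynomial (Fin 2) ℚ)

/-- The variable q ∈ ℚ(q,t). -/
def qv : Kq := algebraMap (MvPolynomial (Fin 2) ℚ) Kq (MvPolynomial.X 0)

/-- The variable t ∈ ℚ(q,t). -/
def tv : Kq := algebraMap (MvPolynomial (Fin 2) ℚ) Kq (MvPolynomial.X 1)

/-- Laurent polynomials in q,t with integer coefficients. -/
abbrev LP : Type := AddMonoidAlgebra ℤ (ℤ × ℤ)

/-- The monomial q^a t^b as a Laurent polynomial. -/
def mono (a b : ℤ) : LP := AddMonoidAlgebra.single (a, b) 1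

/-- Λ(Σ φ_{a,b} q^a t^b) := ∏_{(a,b)≠(0,0)} (1 − q^a t^b)^{φ_{a,b}}. -/
def Lam (f : LP) : Kq :=
  ∏ p ∈ (f.coeff : (ℤ × ℤ) →₀ ℤ).support.erase (0, 0),
    (1 - qv ^ p.1 * tv ^ p.2) ^ ((f.coeff : (ℤ × ℤ) →₀ ℤ) p)

/-- B_λ: the sum of the (q,t)-contents of the boxes of λ (the box in
0-indexed row r and 0-indexed column c contributes the monomial q^c t^r). -/
def Bl (f : ℕ → ℕ) : LP :=
  ∑ᶠ r : ℕ, ∑ c ∈ Finset.range (f r), mono (c : ℤ) (r : ℤ)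

/-- B*_λ: the sum of the inverse (q,t)-contents of the boxes of λ. -/
def Bs (f : ℕ → ℕ) : LP :=
  ∑ᶠ r : ℕ, ∑ c ∈ Finset.range (f r), mono (-(c : ℤ)) (-(r : ℤ))

/-- c(λ;x) := −Λ(−x^{−1} + (1−q)(1−t) B_λ x^{−1} + 1), where x = q^a t^b is
the content of the added box. -/
def cc (f : ℕ → ℕ) (a b : ℤ) : Kq :=
  -Lam (-(mono (-a) (-b)) + (1 - mono 1 0) * (1 - mono 0 1) * Bl f * mono (-a) (-b) + 1)

/-- c*(μ;x) := x^{−1} Λ(−(1−q)(1−t) B*_λ x), where μ = λ ∪ x and x = q^a t^b is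
the content of the added box; here the argument `f` is λ = μ − x. -/
def ccs (f : ℕ → ℕ) (a b : ℤ) : Kq :=
  (qv ^ a * tv ^ b)⁻¹ * Lam (-((1 - mono 1 0) * (1 - mono 0 1) * Bs f * mono a b))

/-- The partition λ ∪ x, where x is the addable box of λ in row i (1-based). -/
def addRow (f : ℕ → ℕ) (i : ℕ) : ℕ → ℕ := Function.update f (i - 1) (f (i - 1) + 1)

/-! ### Basic genericity facts about `qv`, `tv` -/

lemma qv_ne : qv ≠ 0 := by
  simp only [qv]
  rw [map_ne_zero_iff _ (IsFractionRing.injective (MvPolynomial (Fin 2) ℚ) Kq)]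
  exact MvPolynomial.X_ne_zero 0

lemma tv_ne : tv ≠ 0 := by
  simp only [tv]
  rw [map_ne_zero_iff _ (IsFractionRing.injective (MvPolynomial (Fin 2) ℚ) Kq)]
  exact MvPolynomial.X_ne_zero 1

lemma pow_nat_inj (m n m' n' : ℕ) (h : qv^m * tv^n = qv^m' * tv^n') : m = m' ∧ n = n' := by
  have inj := IsFractionRing.injective (MvPolynomial (Fin 2) ℚ) Kq
  have h2 : (MvPolynomial.X 0 : MvPolynomial (Fin 2) ℚ)^m * MvPolynomial.X 1^n
      = MvPolynomial.X 0^m' * MvPolynomial.X 1^n' := by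
    apply inj
    simpa [qv, tv, map_mul, map_pow] using h
  rw [MvPolynomial.X_pow_eq_monomial, MvPolynomial.X_pow_eq_monomial,
    MvPolynomial.X_pow_eq_monomial, MvPolynomial.X_pow_eq_monomial,
    MvPolynomial.monomial_mul, MvPolynomial.monomial_mul, one_mul] at h2
  have h3 := MvPolynomial.monomial_left_injective (one_ne_zero (α := ℚ)) h2
  constructor
  · simpa using DFunLike.congr_fun h3 0
  · simpa using DFunLike.congr_fun h3 1

lemma pow_int_inj {a b c d : ℤ} (h : qv^a * tv^b = qv^c * tv^d) : a = c ∧ b = d := by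
  have key2 : qv^(a.toNat + (-c).toNat) * tv^(b.toNat + (-d).toNat)
      = qv^(c.toNat + (-a).toNat) * tv^(d.toNat + (-b).toNat) := by
    rw [← zpow_natCast qv, ← zpow_natCast tv, ← zpow_natCast qv, ← zpow_natCast tv]
    push_cast
    have e1 : ((a.toNat:ℤ) + (-c).toNat) = a + (((-a).toNat:ℤ) + (-c).toNat) := by omega
    have e2 : ((b.toNat:ℤ) + (-d).toNat) = b + (((-b).toNat:ℤ) + (-d).toNat) := by omega
    have e3 : ((c.toNat:ℤ) + (-a).toNat) = c + (((-a).toNat:ℤ) + (-c).toNat) := by omega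
    have e4 : ((d.toNat:ℤ) + (-b).toNat) = d + (((-b).toNat:ℤ) + (-d).toNat) := by omega
    rw [e1, e2, e3, e4]; simp only [zpow_add₀ qv_ne, zpow_add₀ tv_ne]
    linear_combination (qv^(((-a).toNat:ℤ)) * qv^(((-c).toNat:ℤ)) * tv^(((-b).toNat:ℤ)) * tv^(((-d).toNat:ℤ))) * h
  have := pow_nat_inj _ _ _ _ key2
  omega

lemma pow_pair_inj {a b c d : ℤ} (h : ¬(a = c ∧ b = d)) : qv^a * tv^b ≠ qv^c * tv^d := by
  intro he
  exact h (pow_int_inj he)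

lemma one_sub_ne {a b : ℤ} (h : ¬(a = 0 ∧ b = 0)) : (1:Kq) - qv^a*tv^b ≠ 0 := by
  rw [sub_ne_zero]
  intro he
  exact pow_pair_inj h (by simpa using he.symm)

lemma one_sub_ne' {p : ℤ × ℤ} (h : p ≠ (0,0)) : (1:Kq) - qv^p.1*tv^p.2 ≠ 0 := by
  apply one_sub_ne
  intro ⟨h1, h2⟩
  exact h (Prod.ext h1 h2)

/-! ### `Lam` is a homomorphism -/

lemma Lam_eq_prod (f : LP) (S : Finset (ℤ×ℤ)) (hS : f.coeff.support ⊆ S) :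
    Lam f = ∏ p ∈ S.erase (0,0), (1 - qv ^ p.1 * tv ^ p.2) ^ (f.coeff p) := by
  apply Finset.prod_subset (Finset.erase_subset_erase _ hS)
  intro p hp hnp
  have h0 : f.coeff p = 0 := by
    by_contra hc
    exact hnp (Finset.mem_erase.mpr ⟨(Finset.mem_erase.mp hp).1, Finsupp.mem_support_iff.mpr hc⟩)
  simp [h0]

lemma Lam_add (f g : LP) : Lam (f + g) = Lam f * Lam g := by
  classical
  have hsub : (f + g : LP).coeff.support ⊆
      f.coeff.support ∪ g.coeff.support := Finsupp.support_add
  rw [Lam_eq_prod f _ (Finset.subset_union_left (s₂ := g.coeff.support)),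
    Lam_eq_prod g (f.coeff.support ∪ g.coeff.support) Finset.subset_union_right,
    Lam_eq_prod (f+g) _ hsub, ← Finset.prod_mul_distrib]
  apply Finset.prod_congr rfl
  intro p hp
  have hp0 : p ≠ (0,0) := (Finset.mem_erase.mp hp).1
  have happ : (f + g : LP).coeff p = f.coeff p + g.coeff p := rfl
  rw [happ, zpow_add₀ (one_sub_ne' hp0)]

lemma Lam_zero : Lam 0 = 1 := by simp [Lam]

lemma Lam_ne_zero (f : LP) : Lam f ≠ 0 := by
  apply Finset.prod_ne_zero_iff.mpr
  intro p hp
  exact zpow_ne_zero _ (one_sub_ne' (Finset.mem_erase.mp hp).1)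

lemma Lam_neg (f : LP) : Lam (-f) = (Lam f)⁻¹ := by
  have h := Lam_add f (-f)
  rw [add_neg_cancel, Lam_zero] at h
  exact eq_inv_of_mul_eq_one_left (by rw [mul_comm]; exact h.symm)

lemma Lam_single {a b : ℤ} (h : ¬(a = 0 ∧ b = 0)) : Lam (mono a b) = 1 - qv^a*tv^b := by
  have hs : (mono a b : LP).coeff.support = {(a,b)} :=
    Finsupp.support_single_ne_zero _ one_ne_zero
  rw [Lam, hs]
  rw [Finset.erase_eq_self.mpr (by
    simp only [Finset.mem_singleton]
    intro he
    exact h (by rw [Prod.mk.injEq] at he; exact ⟨he.1.symm, he.2.symm⟩))]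
  simp [mono]

lemma Lam_comb (x1 x2 x3 x4 : LP) :
    Lam (x1 - x2 - x3 + x4) = Lam x1 * (Lam x2)⁻¹ * (Lam x3)⁻¹ * Lam x4 := by
  rw [show x1 - x2 - x3 + x4 = x1 + -x2 + -x3 + x4 by ring]
  rw [Lam_add, Lam_add, Lam_add, Lam_neg, Lam_neg]

/-! ### `Bl` of adding a box -/

lemma mono_mul (a b c d : ℤ) : mono a b * mono c d = mono (a+c) (b+d) := by
  show AddMonoidAlgebra.single ((a,b) : ℤ×ℤ) (1:ℤ) * AddMonoidAlgebra.single (c,d) 1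
    = AddMonoidAlgebra.single (a+c, b+d) 1
  rw [AddMonoidAlgebra.single_mul_single]
  norm_num

lemma Bl_eq (f : ℕ → ℕ) (M : ℕ) (hM : ∀ n, M ≤ n → f n = 0) :
    Bl f = ∑ r ∈ Finset.range M, ∑ c ∈ Finset.range (f r), mono (c : ℤ) (r : ℤ) := by
  apply finsum_eq_sum_of_support_subset
  intro r hr
  simp only [Function.mem_support] at hr
  simp only [Finset.coe_range, Set.mem_Iio]
  by_contra hc
  exact hr (by rw [hM r (by omega)]; simp)

lemma Bl_addRow (f : ℕ → ℕ) (i M : ℕ) (hi : 1 ≤ i) (hM : ∀ n, M ≤ n → f n = 0) :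
    Bl (addRow f i) = Bl f + mono (f (i-1) : ℤ) ((i:ℤ) - 1) := by
  set N := max M i with hN
  have hmem : i - 1 ∈ Finset.range N := by simp [hN]; omega
  have hM' : ∀ n, N ≤ n → addRow f i n = 0 := by
    intro n hn
    have hne : n ≠ i - 1 := by omega
    rw [addRow, Function.update_of_ne hne]
    exact hM n (by omega)
  rw [Bl_eq (addRow f i) N hM', Bl_eq f N (fun n hn => hM n (by omega))]
  have hg' : (fun r => ∑ c ∈ Finset.range (addRow f i r), mono (c : ℤ) (r : ℤ))
      = Function.update (fun r => ∑ c ∈ Finset.range (f r), mono (c : ℤ) (r : ℤ)) (i-1)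
        ((∑ c ∈ Finset.range (f (i-1)), mono (c : ℤ) ((i-1 : ℕ) : ℤ)) + mono (f (i-1) : ℤ) (((i-1:ℕ)) : ℤ)) := by
    funext r
    rcases eq_or_ne r (i-1) with h | h
    · subst h
      rw [Function.update_self, addRow, Function.update_self, Finset.sum_range_succ]
    · rw [Function.update_of_ne h, addRow, Function.update_of_ne h]
  rw [hg', Finset.sum_update_of_mem hmem, ← Finset.add_sum_erase _ _ hmem]
  have : ((i - 1 : ℕ) : ℤ) = (i : ℤ) - 1 := by omega
  rw [this, Finset.sdiff_singleton_eq_erase]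
  abel

/-! ### Behaviour of `cc` under adding a box to the underlying partition -/

lemma cc_add (f : ℕ → ℕ) (i M : ℕ) (hi : 1 ≤ i) (hM : ∀ n, M ≤ n → f n = 0) (a b : ℤ) :
    cc (addRow f i) a b
      = cc f a b * Lam ((1 - mono 1 0) * (1 - mono 0 1)
          * mono ((f (i-1) : ℤ) - a) (((i:ℤ) - 1) - b)) := by
  unfold cc
  rw [Bl_addRow f i M hi hM]
  have harg : -(mono (-a) (-b)) + (1 - mono 1 0) * (1 - mono 0 1)
        * (Bl f + mono (f (i-1) : ℤ) ((i:ℤ) - 1)) * mono (-a) (-b) + 1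
      = (-(mono (-a) (-b)) + (1 - mono 1 0) * (1 - mono 0 1) * Bl f * mono (-a) (-b) + 1)
        + (1 - mono 1 0) * (1 - mono 0 1) * mono ((f (i-1) : ℤ) - a) (((i:ℤ) - 1) - b) := by
    rw [sub_eq_add_neg (f (i-1) : ℤ) a, sub_eq_add_neg ((i:ℤ) - 1) b, ← mono_mul]
    ring
  rw [harg, Lam_add]
  ring

lemma cc_ne (f : ℕ → ℕ) (a b : ℤ) : cc f a b ≠ 0 := by
  unfold cc
  exact neg_ne_zero.mpr (Lam_ne_zero _)

lemma P_mul (e f' : ℤ) :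
    (1 - mono 1 0) * (1 - mono 0 1) * mono e f'
      = mono e f' - mono (e+1) f' - mono e (f'+1) + mono (e+1) (f'+1) := by
  have h1 : mono 1 0 * mono e f' = mono (e+1) f' := by
    rw [mono_mul, add_comm 1 e, zero_add]
  have h2 : mono 0 1 * mono e f' = mono e (f'+1) := by
    rw [mono_mul, zero_add, add_comm 1 f']
  have h3 : mono 1 0 * (mono 0 1 * mono e f') = mono (e+1) (f'+1) := by
    rw [h2, mono_mul, add_comm 1 e]
    norm_num
  calc (1 - mono 1 0) * (1 - mono 0 1) * mono e f'
      = mono e f' - mono 1 0 * mono e f' - mono 0 1 * mono e f'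
        + mono 1 0 * (mono 0 1 * mono e f') := by ring
    _ = _ := by rw [h3, h1, h2]

/-! ### The final field identity -/

lemma final_alg (x y q t : Kq) (hx : x ≠ 0) (hy : y ≠ 0)
    (n1 : y - q*x ≠ 0) (n2 : y - t*x ≠ 0) (n3 : x - q*t*y ≠ 0) (n4 : x - y ≠ 0)
    (n5 : x - q*y ≠ 0) (n6 : x - t*y ≠ 0) (n7 : y - q*t*x ≠ 0) :
    (1 - x*y⁻¹) * (1 - q*(x*y⁻¹))⁻¹ * (1 - t*(x*y⁻¹))⁻¹ * (1 - q*t*(x*y⁻¹)) /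
      ((1 - y*x⁻¹) * (1 - q*(y*x⁻¹))⁻¹ * (1 - t*(y*x⁻¹))⁻¹ * (1 - q*t*(y*x⁻¹))) =
    -((x - t*y) * (x - q*y) * (y - q*t*x)) / ((y - t*x) * (y - q*x) * (x - q*t*y)) := by
  have e1 : 1 - x*y⁻¹ = (y - x) * y⁻¹ := by field_simp
  have e2 : 1 - q*(x*y⁻¹) = (y - q*x) * y⁻¹ := by field_simp
  have e3 : 1 - t*(x*y⁻¹) = (y - t*x) * y⁻¹ := by field_simp
  have e4 : 1 - q*t*(x*y⁻¹) = (y - q*t*x) * y⁻¹ := by field_simp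
  have e5 : 1 - y*x⁻¹ = (x - y) * x⁻¹ := by field_simp
  have e6 : 1 - q*(y*x⁻¹) = (x - q*y) * x⁻¹ := by field_simp
  have e7 : 1 - t*(y*x⁻¹) = (x - t*y) * x⁻¹ := by field_simp
  have e8 : 1 - q*t*(y*x⁻¹) = (x - q*t*y) * x⁻¹ := by field_simp
  rw [e1, e2, e3, e4, e5, e6, e7, e8]
  rw [mul_inv_rev, mul_inv_rev, mul_inv_rev, mul_inv_rev]
  field_simp
  ring

/-! ### The core algebraic lemma -/

lemma main_alg (A B C D : ℤ) (hBD : B ≠ D)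
    (h1 : B - D = -1 → C < A) (h2 : B - D = 1 → A < C) :
    Lam ((1 - mono 1 0) * (1 - mono 0 1) * mono (A - C) (B - D)) /
      Lam ((1 - mono 1 0) * (1 - mono 0 1) * mono (C - A) (D - B)) =
    -((qv^A*tv^B - tv*(qv^C*tv^D)) * (qv^A*tv^B - qv*(qv^C*tv^D)) * (qv^C*tv^D - qv*tv*(qv^A*tv^B))) /
      ((qv^C*tv^D - tv*(qv^A*tv^B)) * (qv^C*tv^D - qv*(qv^A*tv^B)) * (qv^A*tv^B - qv*tv*(qv^C*tv^D))) := by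
  rw [P_mul, P_mul, Lam_comb, Lam_comb]
  rw [Lam_single (by omega), Lam_single (by omega), Lam_single (by omega), Lam_single (by omega),
    Lam_single (by omega), Lam_single (by omega), Lam_single (by omega), Lam_single (by omega)]
  set x := qv^A*tv^B with hxd
  set y := qv^C*tv^D with hyd
  have hx : x ≠ 0 := mul_ne_zero (zpow_ne_zero _ qv_ne) (zpow_ne_zero _ tv_ne)
  have hy : y ≠ 0 := mul_ne_zero (zpow_ne_zero _ qv_ne) (zpow_ne_zero _ tv_ne)
  have hAC : qv^(A-C) * tv^(B-D) = x * y⁻¹ := by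
    rw [zpow_sub₀ qv_ne, zpow_sub₀ tv_ne, hxd, hyd]
    field_simp
  have hCA : qv^(C-A) * tv^(D-B) = y * x⁻¹ := by
    rw [zpow_sub₀ qv_ne, zpow_sub₀ tv_ne, hxd, hyd]
    field_simp
  have hq1 : qv^(A-C+1) * tv^(B-D) = qv * (x * y⁻¹) := by
    rw [zpow_add_one₀ qv_ne]
    linear_combination qv * hAC
  have ht1 : qv^(A-C) * tv^(B-D+1) = tv * (x * y⁻¹) := by
    rw [zpow_add_one₀ tv_ne]
    linear_combination tv * hAC
  have hqt1 : qv^(A-C+1) * tv^(B-D+1) = qv * tv * (x * y⁻¹) := by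
    rw [zpow_add_one₀ qv_ne, zpow_add_one₀ tv_ne]
    linear_combination qv * tv * hAC
  have hq2 : qv^(C-A+1) * tv^(D-B) = qv * (y * x⁻¹) := by
    rw [zpow_add_one₀ qv_ne]
    linear_combination qv * hCA
  have ht2 : qv^(C-A) * tv^(D-B+1) = tv * (y * x⁻¹) := by
    rw [zpow_add_one₀ tv_ne]
    linear_combination tv * hCA
  have hqt2 : qv^(C-A+1) * tv^(D-B+1) = qv * tv * (y * x⁻¹) := by
    rw [zpow_add_one₀ qv_ne, zpow_add_one₀ tv_ne]
    linear_combination qv * tv * hCA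
  rw [hAC, hCA, hq1, ht1, hqt1, hq2, ht2, hqt2]
  -- nonvanishing of the six denominators
  have n1 : y - qv*x ≠ 0 := by
    rw [hxd, hyd, show qv * (qv^A*tv^B) = qv^(A+1)*tv^B by rw [zpow_add_one₀ qv_ne]; ring]
    exact sub_ne_zero.mpr (pow_pair_inj (by omega))
  have n2 : y - tv*x ≠ 0 := by
    rw [hxd, hyd, show tv * (qv^A*tv^B) = qv^A*tv^(B+1) by rw [zpow_add_one₀ tv_ne]; ring]
    exact sub_ne_zero.mpr (pow_pair_inj (by omega))
  have n3 : x - qv*tv*y ≠ 0 := by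
    rw [hxd, hyd, show qv*tv*(qv^C*tv^D) = qv^(C+1)*tv^(D+1)
      by rw [zpow_add_one₀ qv_ne, zpow_add_one₀ tv_ne]; ring]
    exact sub_ne_zero.mpr (pow_pair_inj (by omega))
  have n4 : x - y ≠ 0 := by
    rw [hxd, hyd]
    exact sub_ne_zero.mpr (pow_pair_inj (by omega))
  have n5 : x - qv*y ≠ 0 := by
    rw [hxd, hyd, show qv * (qv^C*tv^D) = qv^(C+1)*tv^D by rw [zpow_add_one₀ qv_ne]; ring]
    exact sub_ne_zero.mpr (pow_pair_inj (by omega))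
  have n6 : x - tv*y ≠ 0 := by
    rw [hxd, hyd, show tv * (qv^C*tv^D) = qv^C*tv^(D+1) by rw [zpow_add_one₀ tv_ne]; ring]
    exact sub_ne_zero.mpr (pow_pair_inj (by omega))
  have n7 : y - qv*tv*x ≠ 0 := by
    rw [hxd, hyd, show qv*tv*(qv^A*tv^B) = qv^(A+1)*tv^(B+1)
      by rw [zpow_add_one₀ qv_ne, zpow_add_one₀ tv_ne]; ring]
    exact sub_ne_zero.mpr (pow_pair_inj (by omega))
  exact final_alg x y qv tv hx hy n1 n2 n3 n4 n5 n6 n7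

/-- monodromy conditions for c(λ;x). -/
theorem stmt3 (f : ℕ → ℕ) (hant : Antitone f) (hfin : ∃ M, ∀ n, M ≤ n → f n = 0)
    (i j : ℕ) (hi : 1 ≤ i) (hj : 1 ≤ j) (hij : i ≠ j)
    -- x is the addable box of λ in row i, y the addable box in row j
    -- (so λ ∪ x, λ ∪ y and λ ∪ x ∪ y are all partitions):
    (haddi : i = 1 ∨ f (i - 1) < f (i - 2))
    (haddj : j = 1 ∨ f (j - 1) < f (j - 2)) :
    (cc f (f (i - 1)) ((i : ℤ) - 1) * cc (addRow f i) (f (j - 1)) ((j : ℤ) - 1)) /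
      (cc f (f (j - 1)) ((j : ℤ) - 1) * cc (addRow f j) (f (i - 1)) ((i : ℤ) - 1)) =
    -(((qv ^ (f (i - 1) : ℤ) * tv ^ ((i : ℤ) - 1)) - tv * (qv ^ (f (j - 1) : ℤ) * tv ^ ((j : ℤ) - 1))) *
       ((qv ^ (f (i - 1) : ℤ) * tv ^ ((i : ℤ) - 1)) - qv * (qv ^ (f (j - 1) : ℤ) * tv ^ ((j : ℤ) - 1))) *
       ((qv ^ (f (j - 1) : ℤ) * tv ^ ((j : ℤ) - 1)) - qv * tv * (qv ^ (f (i - 1) : ℤ) * tv ^ ((i : ℤ) - 1)))) /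
     (((qv ^ (f (j - 1) : ℤ) * tv ^ ((j : ℤ) - 1)) - tv * (qv ^ (f (i - 1) : ℤ) * tv ^ ((i : ℤ) - 1))) *
       ((qv ^ (f (j - 1) : ℤ) * tv ^ ((j : ℤ) - 1)) - qv * (qv ^ (f (i - 1) : ℤ) * tv ^ ((i : ℤ) - 1))) *
       ((qv ^ (f (i - 1) : ℤ) * tv ^ ((i : ℤ) - 1)) - qv * tv * (qv ^ (f (j - 1) : ℤ) * tv ^ ((j : ℤ) - 1)))) := by
  obtain ⟨M, hM⟩ := hfin
  set A : ℤ := (f (i-1) : ℤ) with hA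
  set B : ℤ := (i : ℤ) - 1 with hB
  set C : ℤ := (f (j-1) : ℤ) with hC
  set D : ℤ := (j : ℤ) - 1 with hD
  rw [cc_add f i M hi hM C D, cc_add f j M hj hM A B]
  have ratio : ∀ (u v p m : Kq), u ≠ 0 → v ≠ 0 → m ≠ 0 →
      u * (v * p) / (v * (u * m)) = p / m := by
    intro u v p m hu hv hm
    rcases eq_or_ne p 0 with hp | hp
    · simp [hp]
    rw [div_eq_div_iff (by exact mul_ne_zero hv (mul_ne_zero hu hm)) hm]
    ring
  rw [ratio (cc f A B) (cc f C D) _ _ (cc_ne f A B) (cc_ne f C D) (Lam_ne_zero _)]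
  apply main_alg A B C D
  · rw [hB, hD]
    intro he
    apply hij
    omega
  · intro h
    have h2 := haddj.resolve_left (by rw [hB, hD] at h; omega)
    rw [show j - 2 = i - 1 from by rw [hB, hD] at h; omega] at h2
    rw [hC, hA]
    exact_mod_cast h2
  · intro h
    have h2 := haddi.resolve_left (by rw [hB, hD] at h; omega)
    rw [show i - 2 = j - 1 from by rw [hB, hD] at h; omega] at h2
    rw [hA, hC]
    exact_mod_cast h2

end
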